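/- Let a be a bounded bilinear form on a real Hilbert space V continuously and densely embedded in a Hilbert space H, and suppose α‖z‖_V² ≤ a(z,z) + λ₀‖z‖_H² for some α > 0 and λ₀ ∈ ℝ and all z ∈ V. Then the associated operator A, with domain D(A) = { z ∈ V : v ↦ a(z,v) extends to a bounded functional on H } and (Az, v)_H = a(z,v), is such that −A generates a strongly continuous semigroup on H. -/

import Mathlib

open scoped RealInnerProductSpace


open scoped RealInnerProductSpace
open Filter Topology NormedSpace

set_option synthInstance.maxHeartbeats 400000
set_option maxHeartbeats 800000
set_option linter.unusedSectionVars false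

namespace LionsAux

section ExpLemmas

variable {E : Type*} [NormedAddCommGroup E] [NormedSpace ℝ E] [CompleteSpace E]

theorem norm_pow_le_clm (A : E →L[ℝ] E) (n : ℕ) : ‖A ^ n‖ ≤ ‖A‖ ^ n := by
  induction n with
  | zero => rw [pow_zero, pow_zero]; exact ContinuousLinearMap.norm_id_le
  | succ n ih => rw [pow_succ, pow_succ]; exact (norm_mul_le _ _).trans (by gcongr)

theorem norm_exp_le_clm (A : E →L[ℝ] E) : ‖exp A‖ ≤ Real.exp ‖A‖ := by
  rw [exp_eq_tsum ℝ, Real.exp_eq_exp_ℝ, exp_eq_tsum_div]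
  refine (norm_tsum_le_tsum_norm (norm_expSeries_summable' A)).trans ?_
  refine Summable.tsum_le_tsum (fun n => ?_) (norm_expSeries_summable' A)
    ((norm_expSeries_div_summable ‖A‖).congr (fun n => ?_))
  · rw [norm_smul, norm_inv, div_eq_inv_mul]
    gcongr
    · simp
    · exact norm_pow_le_clm A n
  · rw [Real.norm_of_nonneg (by positivity)]

/-- If `‖J‖ ≤ 1` and `c ≥ 0` then `exp (c • J - c • 1)` is a contraction. -/
theorem norm_exp_sub_le_one (J : E →L[ℝ] E) (hJ : ‖J‖ ≤ 1) {c : ℝ} (hc : 0 ≤ c) :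
    ‖exp (c • J - c • (1 : E →L[ℝ] E))‖ ≤ 1 := by
  letI : NormedAlgebra ℚ (E →L[ℝ] E) := NormedAlgebra.restrictScalars ℚ ℝ (E →L[ℝ] E)
  have hcomm : Commute (-(c • (1 : E →L[ℝ] E))) (c • J) :=
    (((Commute.one_left J).smul_left c).smul_right c).neg_left
  have : c • J - c • (1 : E →L[ℝ] E) = -(c • 1) + c • J := by abel
  rw [this, exp_add_of_commute hcomm]
  have h1 : exp (-(c • (1 : E →L[ℝ] E))) = Real.exp (-c) • 1 := by
    have : -(c • (1 : E →L[ℝ] E)) = algebraMap ℝ (E →L[ℝ] E) (-c) := by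
      rw [Algebra.algebraMap_eq_smul_one, neg_smul]
    rw [this, ← algebraMap_exp_comm, ← Real.exp_eq_exp_ℝ, Algebra.algebraMap_eq_smul_one]
  rw [h1]
  have e1 : ‖Real.exp (-c) • (1 : E →L[ℝ] E)‖ ≤ Real.exp (-c) := by
    rw [norm_smul (Real.exp (-c)) (1 : E →L[ℝ] E), Real.norm_of_nonneg (Real.exp_nonneg _)]
    calc Real.exp (-c) * ‖(1 : E →L[ℝ] E)‖ ≤ Real.exp (-c) * 1 := by
          gcongr; exact ContinuousLinearMap.norm_id_le
      _ = Real.exp (-c) := mul_one _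
  have e2 : ‖exp (c • J)‖ ≤ Real.exp c := by
    refine (norm_exp_le_clm _).trans ?_
    apply Real.exp_le_exp.mpr
    rw [norm_smul c J, Real.norm_of_nonneg hc]
    calc c * ‖J‖ ≤ c * 1 := by gcongr
      _ = c := mul_one c
  calc ‖(Real.exp (-c) • (1 : E →L[ℝ] E)) * exp (c • J)‖
      ≤ ‖Real.exp (-c) • (1 : E →L[ℝ] E)‖ * ‖exp (c • J)‖ := norm_mul_le _ _
    _ ≤ Real.exp (-c) * Real.exp c :=
        mul_le_mul e1 e2 (norm_nonneg _) (Real.exp_nonneg _)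
    _ = 1 := by rw [← Real.exp_add, neg_add_cancel, Real.exp_zero]

end ExpLemmas

section Form

variable {V H : Type*} [NormedAddCommGroup V] [InnerProductSpace ℝ V] [CompleteSpace V]
  [NormedAddCommGroup H] [InnerProductSpace ℝ H] [CompleteSpace H]

/-- The bilinear form `(u, v) ↦ ⟪e u, e v⟫_H` on `V`. -/
noncomputable def formE (e : V →L[ℝ] H) : V →L[ℝ] V →L[ℝ] ℝ :=
  (innerSL ℝ (E := H)).bilinearComp e e

theorem formE_apply (e : V →L[ℝ] H) (u v : V) : formE e u v = ⟪e u, e v⟫ := rfl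

/-- The shifted form `B + μ ⟪e ·, e ·⟫`. -/
noncomputable def Bmu (e : V →L[ℝ] H) (B : V →L[ℝ] V →L[ℝ] ℝ) (μ : ℝ) :
    V →L[ℝ] V →L[ℝ] ℝ := B + μ • formE e

theorem Bmu_apply (e : V →L[ℝ] H) (B : V →L[ℝ] V →L[ℝ] ℝ) (μ : ℝ) (u v : V) :
    Bmu e B μ u v = B u v + μ * ⟪e u, e v⟫ := rfl

theorem isCoercive_Bmu (e : V →L[ℝ] H) (B : V →L[ℝ] V →L[ℝ] ℝ) {α : ℝ} (hα : 0 < α)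
    (hco : ∀ z : V, α * ‖z‖ ^ 2 ≤ B z z) {μ : ℝ} (hμ : 0 ≤ μ) :
    IsCoercive (Bmu e B μ) := by
  refine ⟨α, hα, fun u => ?_⟩
  rw [Bmu_apply]
  have h1 : α * ‖u‖ * ‖u‖ = α * ‖u‖ ^ 2 := by ring
  have h2 : (0:ℝ) ≤ μ * ⟪e u, e u⟫ := mul_nonneg hμ real_inner_self_nonneg
  linarith [hco u]

/-- The resolvent-type operator: `Res e B hc f` is the unique `z ∈ V` with
`Bmu e B μ z v = ⟪f, e v⟫` for all `v`. -/
noncomputable def Res (e : V →L[ℝ] H) (B : V →L[ℝ] V →L[ℝ] ℝ) {μ : ℝ}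
    (hc : IsCoercive (Bmu e B μ)) : H →L[ℝ] V :=
  (hc.continuousLinearEquivOfBilin.symm : V ≃L[ℝ] V).toContinuousLinearMap.comp
    (ContinuousLinearMap.adjoint e)

theorem Res_spec (e : V →L[ℝ] H) (B : V →L[ℝ] V →L[ℝ] ℝ) {μ : ℝ}
    (hc : IsCoercive (Bmu e B μ)) (f : H) (v : V) :
    B (Res e B hc f) v + μ * ⟪e (Res e B hc f), e v⟫ = ⟪f, e v⟫ := by
  have h1 := hc.continuousLinearEquivOfBilin_apply
    (hc.continuousLinearEquivOfBilin.symm (ContinuousLinearMap.adjoint e f)) v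
  rw [hc.continuousLinearEquivOfBilin.apply_symm_apply] at h1
  rw [← Bmu_apply, show Res e B hc f =
    hc.continuousLinearEquivOfBilin.symm (ContinuousLinearMap.adjoint e f) from rfl, ← h1]
  exact ContinuousLinearMap.adjoint_inner_left e v f

theorem Res_unique (e : V →L[ℝ] H) (B : V →L[ℝ] V →L[ℝ] ℝ) {μ : ℝ}
    (hc : IsCoercive (Bmu e B μ)) {f : H} {z : V}
    (h : ∀ v, B z v + μ * ⟪e z, e v⟫ = ⟪f, e v⟫) : z = Res e B hc f := by
  have h2 : ∀ w, ⟪ContinuousLinearMap.adjoint e f, w⟫ = Bmu e B μ z w := by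
    intro w
    rw [Bmu_apply, h w]
    exact ContinuousLinearMap.adjoint_inner_left e w f
  have h3 := hc.unique_continuousLinearEquivOfBilin h2
  have := congrArg hc.continuousLinearEquivOfBilin.symm h3
  rw [hc.continuousLinearEquivOfBilin.symm_apply_apply] at this
  exact this.symm

end Form

end LionsAux


namespace LionsAux2

variable {E : Type*} [NormedAddCommGroup E] [NormedSpace ℝ E] [CompleteSpace E]

theorem hasDerivAt_expApply (P : E →L[ℝ] E) (x : E) (t : ℝ) :
    HasDerivAt (fun s : ℝ => exp (s • P) x) (exp (t • P) (P x)) t := by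
  have h := hasDerivAt_exp_smul_const (𝕂 := ℝ) P t
  have h2 := h.clm_apply (hasDerivAt_const t x)
  simpa using h2

theorem expApply_semigroup (P : E →L[ℝ] E) (s t : ℝ) :
    exp ((s + t) • P) = exp (s • P) * exp (t • P) := by
  letI : NormedAlgebra ℚ (E →L[ℝ] E) := NormedAlgebra.restrictScalars ℚ ℝ (E →L[ℝ] E)
  rw [add_smul]
  exact exp_add_of_commute (((Commute.refl P).smul_left s).smul_right t)

theorem continuous_expApply (P : E →L[ℝ] E) (x : E) :
    Continuous (fun s : ℝ => exp (s • P) x) := by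
  letI : NormedAlgebra ℚ (E →L[ℝ] E) := NormedAlgebra.restrictScalars ℚ ℝ (E →L[ℝ] E)
  have : Continuous (fun s : ℝ => exp (s • P)) :=
    exp_continuous.comp (continuous_id.smul continuous_const)
  exact this.clm_apply continuous_const

theorem norm_exp_diff (P Q : E →L[ℝ] E) (hPQ : Commute P Q)
    (hP : ∀ u : ℝ, 0 ≤ u → ‖exp (u • P)‖ ≤ 1)
    (hQ : ∀ u : ℝ, 0 ≤ u → ‖exp (u • Q)‖ ≤ 1)
    (x : E) {t : ℝ} (ht : 0 ≤ t) :
    ‖exp (t • P) x - exp (t • Q) x‖ ≤ t * ‖P x - Q x‖ := by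
  set f : ℝ → E := fun s => exp ((t - s) • Q) (exp (s • P) x) with hf
  set f' : ℝ → E := fun s => exp ((t - s) • Q) (exp (s • P) ((P - Q) x)) with hf'
  have hderiv : ∀ s : ℝ, HasDerivAt f (f' s) s := by
    intro s
    have hc : HasDerivAt (fun s : ℝ => exp ((t - s) • Q))
        ((-1 : ℝ) • (exp ((t - s) • Q) * Q)) s := by
      have hinner : HasDerivAt (fun s : ℝ => t - s) (-1 : ℝ) s := by
        simpa using (hasDerivAt_id s).const_sub t
      exact (hasDerivAt_exp_smul_const (𝕂 := ℝ) Q (t - s)).scomp s hinner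
    have hd : HasDerivAt (fun s : ℝ => exp (s • P) x) (exp (s • P) (P x)) s :=
      hasDerivAt_expApply P x s
    have h2 := hc.clm_apply hd
    convert h2 using 1
    -- goal: f' s = ((-1) • (exp((t-s)Q) * Q)) (exp(sP) x) + exp((t-s)Q) (exp(sP)(P x))
    have hcomm : Q * exp (s • P) = exp (s • P) * Q :=
      (hPQ.symm.smul_right s).exp_right.eq
    have : (Q : E →L[ℝ] E) (exp (s • P) x) = exp (s • P) (Q x) := by
      have := congrArg (fun (T : E →L[ℝ] E) => T x) hcomm
      simpa [ContinuousLinearMap.mul_apply] using this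
    simp only [hf', ContinuousLinearMap.smul_apply, neg_one_smul,
      ContinuousLinearMap.neg_apply, ContinuousLinearMap.mul_apply, ContinuousLinearMap.sub_apply,
      map_sub, this]
    abel
  have hbound : ∀ s ∈ Set.Icc (0:ℝ) t, ‖f' s‖ ≤ ‖P x - Q x‖ := by
    intro s hs
    have hq := hQ (t - s) (by linarith [hs.2])
    have hp := hP s hs.1
    have hA : ‖exp (s • P) ((P - Q) x)‖ ≤ ‖(P - Q) x‖ :=
      (ContinuousLinearMap.le_opNorm _ _).trans (mul_le_of_le_one_left (norm_nonneg _) hp)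
    have hB : ‖f' s‖ ≤ ‖exp (s • P) ((P - Q) x)‖ :=
      (ContinuousLinearMap.le_opNorm _ _).trans (mul_le_of_le_one_left (norm_nonneg _) hq)
    have hPQx : ((P - Q) : E →L[ℝ] E) x = P x - Q x := rfl
    calc ‖f' s‖ ≤ ‖(P - Q) x‖ := hB.trans hA
      _ = ‖P x - Q x‖ := by rw [hPQx]
  have hconv := Convex.norm_image_sub_le_of_norm_hasDerivWithin_le
    (f := f) (f' := f') (C := ‖P x - Q x‖)
    (fun s hs => (hderiv s).hasDerivWithinAt) hbound (convex_Icc 0 t)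
    (Set.left_mem_Icc.2 ht) (Set.right_mem_Icc.2 ht)
  have hft : f t = exp (t • P) x := by simp [hf]
  have hf0 : f 0 = exp (t • Q) x := by simp [hf]
  calc ‖exp (t • P) x - exp (t • Q) x‖ = ‖f t - f 0‖ := by rw [hft, hf0]
    _ ≤ ‖P x - Q x‖ * ‖t - 0‖ := hconv
    _ = t * ‖P x - Q x‖ := by rw [sub_zero, Real.norm_of_nonneg ht, mul_comm]

end LionsAux2

namespace LionsAux3

variable {V H : Type*} [NormedAddCommGroup V] [InnerProductSpace ℝ V] [CompleteSpace V]
  [NormedAddCommGroup H] [InnerProductSpace ℝ H] [CompleteSpace H]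

theorem lions_main (e : V →L[ℝ] H) (hdense : DenseRange e)
    (B : V →L[ℝ] V →L[ℝ] ℝ) {α : ℝ} (hα : 0 < α)
    (hco : ∀ z : V, α * ‖z‖ ^ 2 ≤ B z z)
    (hcn : ∀ n : ℕ, IsCoercive (LionsAux.Bmu e B ((n : ℝ) + 1)))
    (R : ℕ → H →L[ℝ] V)
    (hRspec : ∀ (n : ℕ) (f : H) (v : V),
      B (R n f) v + ((n : ℝ) + 1) * ⟪e (R n f), e v⟫ = ⟪f, e v⟫)
    (hRuniq : ∀ (n : ℕ) (f : H) (z : V),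
      (∀ v, B z v + ((n : ℝ) + 1) * ⟪e z, e v⟫ = ⟪f, e v⟫) → z = R n f) :
    ∃ S : ℝ → H →L[ℝ] H,
      S 0 = 1 ∧
      (∀ s t : ℝ, 0 ≤ s → 0 ≤ t → S (s + t) = (S s).comp (S t)) ∧
      (∀ x : H, ContinuousOn (fun t => S t x) (Set.Ici (0:ℝ))) ∧
      (∀ z : V, ∀ g : H, (∀ v : V, B z v = ⟪g, e v⟫) →
        HasDerivWithinAt (fun t => S t (e z)) (-g) (Set.Ici (0:ℝ)) 0) := by
  -- notation
  set μ : ℕ → ℝ := fun n => (n : ℝ) + 1 with hμ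
  have hμpos : ∀ n, 0 < μ n := fun n => by positivity
  have hRspec' : ∀ (n : ℕ) (f : H) (v : V),
      B (R n f) v + μ n * ⟪e (R n f), e v⟫ = ⟪f, e v⟫ := hRspec
  have hRuniq' : ∀ (n : ℕ) (f : H) (z : V),
      (∀ v, B z v + μ n * ⟪e z, e v⟫ = ⟪f, e v⟫) → z = R n f := hRuniq
  -- the approximating resolvents
  set J : ℕ → H →L[ℝ] H := fun n => μ n • (e.comp (R n)) with hJ
  have hJapp : ∀ n f, J n f = μ n • e (R n f) := fun n f => rfl
  have hBnonneg : ∀ z : V, 0 ≤ B z z := fun z =>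
    le_trans (by positivity) (hco z)
  -- contraction property of J
  have hJnormle : ∀ n f, ‖J n f‖ ≤ ‖f‖ := by
    intro n f
    set z := R n f with hz
    have h1 := hRspec' n f z
    have hBz := hBnonneg z
    have h4 : ⟪e z, e z⟫ = ‖e z‖ * ‖e z‖ := real_inner_self_eq_norm_mul_norm (e z)
    have h5 : μ n * (‖e z‖ * ‖e z‖) ≤ ‖f‖ * ‖e z‖ := by
      rw [← h4]
      have h3 : ⟪f, e z⟫ ≤ ‖f‖ * ‖e z‖ := real_inner_le_norm f (e z)
      linarith
    have hJf : ‖J n f‖ = μ n * ‖e z‖ := by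
      rw [hJapp, norm_smul, Real.norm_of_nonneg (hμpos n).le]
    rcases eq_or_lt_of_le (norm_nonneg (e z)) with h0 | h0
    · rw [hJf, ← h0, mul_zero]; exact norm_nonneg f
    · rw [hJf]; nlinarith [h5, h0]
  have hJnorm : ∀ n, ‖J n‖ ≤ 1 := fun n =>
    ContinuousLinearMap.opNorm_le_bound _ zero_le_one
      (fun f => by rw [one_mul]; exact hJnormle n f)
  -- R n f lies in the domain
  have hRD : ∀ n f v, B (R n f) v = ⟪f - J n f, e v⟫ := by
    intro n f v
    have h1 := hRspec' n f v
    rw [inner_sub_left, hJapp, real_inner_smul_left]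
    linarith
  -- resolvent applied to domain elements
  have hshift : ∀ (n : ℕ) (z : V) (g : H), (∀ v, B z v = ⟪g, e v⟫) →
      R n g = z - μ n • R n (e z) := by
    intro n z g hz
    refine (hRuniq' n g (z - μ n • R n (e z)) ?_).symm
    intro v
    have h1 := hRspec' n (e z) v
    have h2 := hz v
    simp only [map_sub, map_smul, ContinuousLinearMap.sub_apply,
      ContinuousLinearMap.smul_apply, smul_eq_mul, inner_sub_left, real_inner_smul_left]
    linear_combination h2 - μ n * h1
  have hJD : ∀ (n : ℕ) (z : V) (g : H), (∀ v, B z v = ⟪g, e v⟫) →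
      μ n • (e z - J n (e z)) = J n g := by
    intro n z g hz
    calc μ n • (e z - J n (e z)) = μ n • (e z - μ n • e (R n (e z))) := by rw [hJapp]
      _ = μ n • (e (z - μ n • R n (e z))) := by rw [map_sub, map_smul]
      _ = μ n • e (R n g) := by rw [← hshift n z g hz]
      _ = J n g := (hJapp n g).symm
  have hJDnorm : ∀ (n : ℕ) (z : V) (g : H), (∀ v, B z v = ⟪g, e v⟫) →
      ‖e z - J n (e z)‖ ≤ ‖g‖ / μ n := by
    intro n z g hz
    have h2 : μ n * ‖e z - J n (e z)‖ = ‖J n g‖ := by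
      rw [← hJD n z g hz, norm_smul, Real.norm_of_nonneg (hμpos n).le]
    rw [le_div_iff₀ (hμpos n), mul_comm, h2]
    exact hJnormle n g
  -- commutation of resolvents
  have hres : ∀ n m f, R n f = R m f + (μ m - μ n) • R n (e (R m f)) := by
    intro n m f
    refine (hRuniq' n f (R m f + (μ m - μ n) • R n (e (R m f))) ?_).symm
    intro v
    have h1 := hRspec' m f v
    have h2 := hRspec' n (e (R m f)) v
    simp only [map_add, map_smul, ContinuousLinearMap.add_apply,
      ContinuousLinearMap.smul_apply, smul_eq_mul, inner_add_left, real_inner_smul_left]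
    linear_combination h1 + (μ m - μ n) * h2
  have hRcomm : ∀ n m f, R n (e (R m f)) = R m (e (R n f)) := by
    intro n m f
    rcases eq_or_ne n m with rfl | hnm
    · rfl
    have hc : μ m - μ n ≠ 0 := by
      rw [sub_ne_zero]
      intro h
      apply hnm
      have h' : (n : ℝ) = (m : ℝ) := by simp only [hμ] at h; linarith
      exact Nat.cast_injective h'
    have h1 := hres n m f
    have h2 := hres m n f
    have h3 : (μ m - μ n) • R n (e (R m f)) = R n f - R m f := by
      rw [h1]; abel
    have h4 : (μ m - μ n) • R m (e (R n f)) = R n f - R m f := by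
      have : (μ n - μ m) • R m (e (R n f)) = R m f - R n f := by rw [h2]; abel
      have h5 := congrArg (fun w => -w) this
      simp only [← neg_smul, neg_sub] at h5
      convert h5 using 2 <;> ring
    exact smul_right_injective V hc (h3.trans h4.symm)
  have hJcomm : ∀ n m, Commute (J n) (J m) := by
    intro n m
    show J n * J m = J m * J n
    ext f
    have key : ∀ a b : ℕ, J a (J b f) = (μ a * μ b) • e (R a (e (R b f))) := by
      intro a b
      rw [hJapp, hJapp, map_smul, map_smul, smul_smul]
    rw [ContinuousLinearMap.mul_apply, ContinuousLinearMap.mul_apply, key, key,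
      hRcomm n m f, mul_comm]
  -- density of the domain
  have hdens : ∀ (x : H) (ε : ℝ), 0 < ε → ∃ (z : V) (g : H),
      (∀ v, B z v = ⟪g, e v⟫) ∧ ‖x - e z‖ < ε := by
    have hDsub : ∃ Dsub : Submodule ℝ V,
        (Dsub : Set V) = {z | ∃ g : H, ∀ v, B z v = ⟪g, e v⟫} := by
      refine ⟨{ carrier := {z | ∃ g : H, ∀ v, B z v = ⟪g, e v⟫}
                add_mem' := ?_, zero_mem' := ?_, smul_mem' := ?_ }, rfl⟩
      · rintro a b ⟨ga, hga⟩ ⟨gb, hgb⟩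
        exact ⟨ga + gb, fun v => by
          rw [map_add, ContinuousLinearMap.add_apply, hga v, hgb v, inner_add_left]⟩
      · exact ⟨0, fun v => by simp⟩
      · rintro c a ⟨g, hg⟩
        exact ⟨c • g, fun v => by
          rw [map_smul, ContinuousLinearMap.smul_apply, smul_eq_mul, hg v,
            real_inner_smul_left]⟩
    obtain ⟨Dsub, hDsub⟩ := hDsub
    set K : Submodule ℝ H := Dsub.map (e : V →ₗ[ℝ] H) with hKdef
    have hK : Kᗮ = ⊥ := by
      rw [Submodule.eq_bot_iff]
      intro h hh
      have horth : ∀ z ∈ Dsub, ⟪e z, h⟫ = 0 := fun z hz =>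
        (Submodule.mem_orthogonal K h).mp hh (e z) ⟨z, hz, rfl⟩
      have hz1mem : R 0 h ∈ Dsub := by
        have hmem : R 0 h ∈ (Dsub : Set V) := by
          rw [hDsub]
          exact ⟨h - J 0 h, fun v => hRD 0 h v⟩
        exact hmem
      have h2 : ⟪h, e (R 0 h)⟫ = 0 := by
        rw [real_inner_comm]; exact horth _ hz1mem
      have h1 := hRspec' 0 h (R 0 h)
      have h3 : B (R 0 h) (R 0 h) + μ 0 * ⟪e (R 0 h), e (R 0 h)⟫ = 0 := by
        rw [h1, h2]
      have hco' := hco (R 0 h)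
      have hnn : (0:ℝ) ≤ ⟪e (R 0 h), e (R 0 h)⟫ := real_inner_self_nonneg
      have hz0 : R 0 h = 0 := by
        have h5 : ‖R 0 h‖ ^ 2 ≤ 0 := by nlinarith [hμpos 0]
        have h6 : ‖R 0 h‖ ^ 2 = 0 := le_antisymm h5 (by positivity)
        exact norm_eq_zero.mp (sq_eq_zero_iff.mp h6)
      have hall : ∀ v, ⟪h, e v⟫ = 0 := by
        intro v
        have hv := hRspec' 0 h v
        rw [hz0] at hv
        simpa using hv.symm
      have hcl : ∀ y : H, ⟪h, y⟫ = 0 := by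
        have hcls : IsClosed {y : H | ⟪h, y⟫ = 0} :=
          isClosed_eq (Continuous.inner continuous_const continuous_id) continuous_const
        intro y
        have hy : y ∈ closure (Set.range e) := by rw [hdense.closure_range]; trivial
        refine hcls.closure_subset_iff.mpr ?_ hy
        rintro _ ⟨v, rfl⟩
        exact hall v
      have := hcl h
      rwa [inner_self_eq_zero] at this
    have hKtop := Submodule.topologicalClosure_eq_top_iff.mpr hK
    intro x ε hε
    have hxcl : x ∈ closure (K : Set H) := by
      have hx : x ∈ K.topologicalClosure := by rw [hKtop]; trivial
      exact hx
    rcases Metric.mem_closure_iff.mp hxcl ε hε with ⟨y, hyK, hxy⟩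
    rcases hyK with ⟨z, hzD, rfl⟩
    have hzD' : z ∈ (Dsub : Set V) := hzD
    rw [hDsub] at hzD'
    rcases hzD' with ⟨g, hg⟩
    exact ⟨z, g, hg, by rwa [← dist_eq_norm]⟩
  -- convergence of the resolvents to the identity
  have hJtend : ∀ f : H, Tendsto (fun n => J n f) atTop (𝓝 f) := by
    intro f
    rw [Metric.tendsto_atTop]
    intro ε hε
    obtain ⟨z, g, hg, hfz⟩ := hdens f (ε/3) (by positivity)
    have htend : Tendsto (fun n : ℕ => ‖g‖ / μ n) atTop (𝓝 0) := by
      apply Tendsto.div_atTop (tendsto_const_nhds)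
      simp only [hμ]
      exact tendsto_atTop_add_const_right atTop 1 tendsto_natCast_atTop_atTop
    obtain ⟨N, hN⟩ := (Metric.tendsto_atTop.mp htend) (ε/3) (by positivity)
    refine ⟨N, fun n hn => ?_⟩
    have hsplit : J n f - f = J n (f - e z) + (J n (e z) - e z) + (e z - f) := by
      rw [map_sub]; abel
    have h1 : ‖J n f - f‖ ≤ ‖J n (f - e z)‖ + ‖J n (e z) - e z‖ + ‖e z - f‖ := by
      rw [hsplit]; exact norm_add₃_le
    have h2 : ‖J n (f - e z)‖ ≤ ‖f - e z‖ := hJnormle n _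
    have h3 : ‖J n (e z) - e z‖ ≤ ‖g‖ / μ n := by
      rw [norm_sub_rev]; exact hJDnorm n z g hg
    have h4 : ‖g‖ / μ n < ε/3 := by
      have := hN n hn
      rwa [Real.dist_eq, sub_zero, abs_of_nonneg (by positivity)] at this
    have h5 : ‖e z - f‖ = ‖f - e z‖ := norm_sub_rev _ _
    rw [dist_eq_norm]
    linarith
  -- the Yosida approximations and their semigroups
  set Bop : ℕ → H →L[ℝ] H := fun n => μ n • J n - μ n • 1 with hBop
  set SG : ℕ → ℝ → H →L[ℝ] H := fun n t => exp (t • Bop n) with hSG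
  have hSGnorm : ∀ (n : ℕ) (t : ℝ), 0 ≤ t → ‖SG n t‖ ≤ 1 := by
    intro n t ht
    have heq : t • Bop n = (t * μ n) • J n - (t * μ n) • (1 : H →L[ℝ] H) := by
      simp only [hBop, smul_sub, smul_smul]
    show ‖exp (t • Bop n)‖ ≤ 1
    rw [heq]
    exact LionsAux.norm_exp_sub_le_one (J n) (hJnorm n) (mul_nonneg ht (hμpos n).le)
  have hSGx : ∀ (n : ℕ) (t : ℝ) (x : H), 0 ≤ t → ‖SG n t x‖ ≤ ‖x‖ := by
    intro n t x ht
    exact (ContinuousLinearMap.le_opNorm _ _).trans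
      (mul_le_of_le_one_left (norm_nonneg _) (hSGnorm n t ht))
  have hBopD : ∀ (n : ℕ) (z : V) (g : H), (∀ v, B z v = ⟪g, e v⟫) →
      Bop n (e z) = -(J n g) := by
    intro n z g hz
    have h := hJD n z g hz
    have h2 : Bop n (e z) = μ n • J n (e z) - μ n • e z := by
      simp [hBop, ContinuousLinearMap.sub_apply, ContinuousLinearMap.smul_apply,
        ContinuousLinearMap.one_apply]
    rw [h2, ← h, smul_sub]
    abel
  have hBopcomm : ∀ n m, Commute (Bop n) (Bop m) := by
    intro n m
    have h := hJcomm n m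
    have cAC : Commute (μ n • J n) (μ m • J m) := (h.smul_left (μ n)).smul_right (μ m)
    have cAD : Commute (μ n • J n) (μ m • (1 : H →L[ℝ] H)) :=
      ((Commute.one_right (J n)).smul_left (μ n)).smul_right (μ m)
    have cBC : Commute (μ n • (1 : H →L[ℝ] H)) (μ m • J m) :=
      ((Commute.one_left (J m)).smul_left (μ n)).smul_right (μ m)
    have cBD : Commute (μ n • (1 : H →L[ℝ] H)) (μ m • (1 : H →L[ℝ] H)) :=
      (((Commute.refl 1).smul_left (μ n)).smul_right (μ m))
    exact (cAC.sub_right cAD).sub_left (cBC.sub_right cBD)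
  have hSGdiff : ∀ (n m : ℕ) (x : H) (t : ℝ), 0 ≤ t →
      ‖SG n t x - SG m t x‖ ≤ t * ‖Bop n x - Bop m x‖ := by
    intro n m x t ht
    exact LionsAux2.norm_exp_diff (Bop n) (Bop m) (hBopcomm n m)
      (fun u hu => hSGnorm n u hu) (fun u hu => hSGnorm m u hu) x ht
  -- key Cauchy estimate
  have hKey : ∀ (x : H) (z : V) (g : H), (∀ v, B z v = ⟪g, e v⟫) →
      ∀ (n m : ℕ) (t : ℝ), 0 ≤ t →
      ‖SG n t x - SG m t x‖ ≤ 2 * ‖x - e z‖ + t * (‖J n g - g‖ + ‖J m g - g‖) := by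
    intro x z g hz n m t ht
    have hsplit : SG n t x - SG m t x =
        (SG n t (x - e z) - SG m t (x - e z)) + (SG n t (e z) - SG m t (e z)) := by
      simp only [map_sub]; abel
    have h1 : ‖SG n t (x - e z) - SG m t (x - e z)‖ ≤ 2 * ‖x - e z‖ := by
      calc ‖SG n t (x - e z) - SG m t (x - e z)‖
          ≤ ‖SG n t (x - e z)‖ + ‖SG m t (x - e z)‖ := norm_sub_le _ _
        _ ≤ ‖x - e z‖ + ‖x - e z‖ := add_le_add (hSGx n t _ ht) (hSGx m t _ ht)
        _ = 2 * ‖x - e z‖ := by ring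
    have h2 : ‖SG n t (e z) - SG m t (e z)‖ ≤ t * (‖J n g - g‖ + ‖J m g - g‖) := by
      refine (hSGdiff n m (e z) t ht).trans ?_
      have hb : Bop n (e z) - Bop m (e z) = J m g - J n g := by
        rw [hBopD n z g hz, hBopD m z g hz]; abel
      rw [hb]
      have hnm : ‖J m g - J n g‖ ≤ ‖J n g - g‖ + ‖J m g - g‖ := by
        have heq : J m g - J n g = (J m g - g) - (J n g - g) := by abel
        rw [heq]
        exact (norm_sub_le _ _).trans (by rw [add_comm])
      exact mul_le_mul_of_nonneg_left hnm ht
    calc ‖SG n t x - SG m t x‖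
        ≤ ‖SG n t (x - e z) - SG m t (x - e z)‖ + ‖SG n t (e z) - SG m t (e z)‖ := by
          rw [hsplit]; exact norm_add_le _ _
      _ ≤ 2 * ‖x - e z‖ + t * (‖J n g - g‖ + ‖J m g - g‖) := add_le_add h1 h2
  have hUnifC : ∀ (x : H) (T : ℝ), 0 ≤ T → ∀ ε : ℝ, 0 < ε → ∃ N : ℕ,
      ∀ n ≥ N, ∀ m ≥ N, ∀ t ∈ Set.Icc (0:ℝ) T, ‖SG n t x - SG m t x‖ < ε := by
    intro x T hT ε hε
    obtain ⟨z, g, hg, hxz⟩ := hdens x (ε/8) (by positivity)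
    have hT1 : (0:ℝ) < T + 1 := by linarith
    have htend : Tendsto (fun n => ‖J n g - g‖) atTop (𝓝 0) := by
      have h := hJtend g
      rwa [tendsto_iff_norm_sub_tendsto_zero] at h
    obtain ⟨N, hN⟩ := (Metric.tendsto_atTop.mp htend) (ε/(8*(T+1))) (by positivity)
    refine ⟨N, fun n hn m hm t htI => ?_⟩
    have key := hKey x z g hg n m t htI.1
    have hJn : ‖J n g - g‖ < ε/(8*(T+1)) := by
      have := hN n hn
      rwa [Real.dist_eq, sub_zero, abs_of_nonneg (norm_nonneg _)] at this
    have hJm : ‖J m g - g‖ < ε/(8*(T+1)) := by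
      have := hN m hm
      rwa [Real.dist_eq, sub_zero, abs_of_nonneg (norm_nonneg _)] at this
    have hb : ‖J n g - g‖ + ‖J m g - g‖ ≤ 2*(ε/(8*(T+1))) := by linarith
    have h2 : t * (‖J n g - g‖ + ‖J m g - g‖) ≤ T * (2*(ε/(8*(T+1)))) :=
      mul_le_mul htI.2 hb (by positivity) hT
    have h3 : T * (2 * (ε / (8 * (T + 1)))) ≤ ε / 4 := by
      have heq : T * (2 * (ε / (8 * (T + 1)))) = (T/(T+1)) * (ε/4) := by
        field_simp
        ring
      rw [heq]
      calc (T/(T+1)) * (ε/4) ≤ 1 * (ε/4) :=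
            mul_le_mul_of_nonneg_right ((div_le_one hT1).mpr (by linarith)) (by positivity)
        _ = ε/4 := one_mul _
    linarith
  -- construction of the limit semigroup
  have hex : ∀ (t : ℝ) (x : H), ∃ y : H,
      Tendsto (fun n => SG n (max t 0) x) atTop (𝓝 y) := by
    intro t x
    have ht'0 : 0 ≤ max t 0 := le_max_right t 0
    apply cauchySeq_tendsto_of_complete
    rw [Metric.cauchySeq_iff]
    intro ε hε
    obtain ⟨N, hN⟩ := hUnifC x (max t 0) ht'0 ε hε
    exact ⟨N, fun m hm n hn => by
      rw [dist_eq_norm]; exact hN m hm n hn (max t 0) ⟨ht'0, le_rfl⟩⟩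
  have hLωex : ∀ t : ℝ, ∃ L : H →L[ℝ] H, ∀ x : H,
      Tendsto (fun n => SG n (max t 0) x) atTop (𝓝 (L x)) := by
    intro t
    choose y hy using hex t
    have hadd : ∀ a b, y (a + b) = y a + y b := fun a b =>
      tendsto_nhds_unique (hy (a + b)) (by simpa [map_add] using ((hy a).add (hy b)))
    have hsmul : ∀ (c : ℝ) (a : H), y (c • a) = c • y a := fun c a =>
      tendsto_nhds_unique (hy (c • a)) (by simpa [map_smul] using ((hy a).const_smul c))
    have hbd : ∀ a, ‖y a‖ ≤ 1 * ‖a‖ := by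
      intro a
      rw [one_mul]
      exact le_of_tendsto (hy a).norm
        (Eventually.of_forall fun n => hSGx n _ a (le_max_right t 0))
    exact ⟨LinearMap.mkContinuous ⟨⟨y, hadd⟩, hsmul⟩ 1 hbd, hy⟩
  choose Lop hLop using hLωex
  have hLopx : ∀ (t : ℝ), 0 ≤ t → ∀ (x : H),
      Tendsto (fun n => SG n t x) atTop (𝓝 (Lop t x)) := by
    intro t ht x
    have := hLop t x
    rwa [max_eq_left ht] at this
  have hLnorm : ∀ t x, ‖Lop t x‖ ≤ ‖x‖ := by
    intro t x
    exact le_of_tendsto (hLop t x).norm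
      (Eventually.of_forall fun n => hSGx n _ x (le_max_right t 0))
  have hL0 : Lop 0 = 1 := by
    ext x
    have h1 : Tendsto (fun n => SG n 0 x) atTop (𝓝 (Lop 0 x)) := hLopx 0 le_rfl x
    have h2 : ∀ n, SG n 0 x = x := fun n => by
      show exp ((0:ℝ) • Bop n) x = x
      rw [zero_smul, exp_zero, ContinuousLinearMap.one_apply]
    have h3 := tendsto_nhds_unique h1 (by simp only [h2]; exact tendsto_const_nhds)
    rw [h3, ContinuousLinearMap.one_apply]
  have hLadd : ∀ s t : ℝ, 0 ≤ s → 0 ≤ t → Lop (s + t) = (Lop s).comp (Lop t) := by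
    intro s t hs ht
    ext x
    have h1 : ∀ n, SG n (s + t) x = SG n s (SG n t x) := by
      intro n
      show exp ((s + t) • Bop n) x = exp (s • Bop n) (exp (t • Bop n) x)
      rw [LionsAux2.expApply_semigroup, ContinuousLinearMap.mul_apply]
    have hb : ∀ n, ‖SG n s (SG n t x) - Lop s (Lop t x)‖ ≤
        ‖SG n t x - Lop t x‖ + ‖SG n s (Lop t x) - Lop s (Lop t x)‖ := by
      intro n
      calc ‖SG n s (SG n t x) - Lop s (Lop t x)‖
          = ‖SG n s (SG n t x - Lop t x) + (SG n s (Lop t x) - Lop s (Lop t x))‖ := by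
            rw [map_sub]; congr 1; abel
        _ ≤ ‖SG n s (SG n t x - Lop t x)‖ + ‖SG n s (Lop t x) - Lop s (Lop t x)‖ :=
            norm_add_le _ _
        _ ≤ ‖SG n t x - Lop t x‖ + ‖SG n s (Lop t x) - Lop s (Lop t x)‖ :=
            add_le_add (hSGx n s _ hs) le_rfl
    have hz : Tendsto (fun n => ‖SG n t x - Lop t x‖
        + ‖SG n s (Lop t x) - Lop s (Lop t x)‖) atTop (𝓝 0) := by
      have ha := tendsto_iff_norm_sub_tendsto_zero.mp (hLopx t ht x)
      have hb' := tendsto_iff_norm_sub_tendsto_zero.mp (hLopx s hs (Lop t x))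
      simpa using ha.add hb'
    have h2 : Tendsto (fun n => SG n s (SG n t x)) atTop (𝓝 (Lop s (Lop t x))) := by
      rw [tendsto_iff_norm_sub_tendsto_zero]
      exact squeeze_zero (fun n => norm_nonneg _) hb hz
    have h3 := hLopx (s + t) (by linarith) x
    rw [show (fun n => SG n (s + t) x) = fun n => SG n s (SG n t x) from funext h1] at h3
    have h4 := tendsto_nhds_unique h3 h2
    rw [ContinuousLinearMap.comp_apply]
    exact h4
  have hUnif : ∀ (x : H) (T : ℝ), 0 ≤ T → ∀ ε : ℝ, 0 < ε → ∃ N : ℕ,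
      ∀ n ≥ N, ∀ t ∈ Set.Icc (0:ℝ) T, ‖SG n t x - Lop t x‖ ≤ ε := by
    intro x T hT ε hε
    obtain ⟨N, hN⟩ := hUnifC x T hT ε hε
    refine ⟨N, fun n hn t htI => ?_⟩
    have hlim : Tendsto (fun m => ‖SG n t x - SG m t x‖) atTop
        (𝓝 ‖SG n t x - Lop t x‖) := (tendsto_const_nhds.sub (hLopx t htI.1 x)).norm
    exact le_of_tendsto hlim (eventually_atTop.mpr ⟨N, fun m hm => (hN n hn m hm t htI).le⟩)
  have hLcont : ∀ x : H, ContinuousOn (fun t => Lop t x) (Set.Ici (0:ℝ)) := by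
    intro x t₀ ht₀
    have ht₀' : (0:ℝ) ≤ t₀ := ht₀
    have hTc : ContinuousOn (fun t => Lop t x) (Set.Icc 0 (t₀+1)) := by
      have hNe : ∀ ε : ℝ, 0 < ε → ∀ᶠ n in atTop, ∀ t ∈ Set.Icc (0:ℝ) (t₀+1),
          dist (Lop t x) (SG n t x) < ε := by
        intro ε hε
        obtain ⟨N, hN⟩ := hUnif x (t₀+1) (by linarith) (ε/2) (by positivity)
        refine eventually_atTop.mpr ⟨N, fun n hn t htI => ?_⟩
        rw [dist_comm, dist_eq_norm]
        calc ‖SG n t x - Lop t x‖ ≤ ε/2 := hN n hn t htI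
          _ < ε := by linarith
      have hTU : TendstoUniformlyOn (fun n t => SG n t x) (fun t => Lop t x) atTop
          (Set.Icc 0 (t₀+1)) := Metric.tendstoUniformlyOn_iff.mpr hNe
      refine hTU.continuousOn (Eventually.of_forall fun n => ?_).frequently
      exact (LionsAux2.continuous_expApply (Bop n) x).continuousOn
    have hmem : Set.Icc (0:ℝ) (t₀+1) ∈ 𝓝[Set.Ici (0:ℝ)] t₀ := by
      rw [← Set.Ici_inter_Iic]
      exact Filter.inter_mem self_mem_nhdsWithin
        (mem_nhdsWithin_of_mem_nhds (Iic_mem_nhds (by linarith)))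
    exact (hTc t₀ ⟨ht₀', by linarith⟩).mono_of_mem_nhdsWithin hmem
  have hIntId : ∀ (z : V) (g : H), (∀ v, B z v = ⟪g, e v⟫) → ∀ t : ℝ, 0 ≤ t →
      Lop t (e z) = e z - ∫ s in (0:ℝ)..t, Lop s g := by
    intro z g hz t ht
    have hBval : ∀ n, Bop n (e z) = -(J n g) := fun n => hBopD n z g hz
    have hstepA : ∀ n : ℕ, SG n t (e z) - e z
        = ∫ s in (0:ℝ)..t, SG n s (Bop n (e z)) := by
      intro n
      have hd : ∀ s ∈ Set.uIcc (0:ℝ) t, HasDerivAt (fun r : ℝ => exp (r • Bop n) (e z))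
          (exp (s • Bop n) (Bop n (e z))) s :=
        fun s _ => LionsAux2.hasDerivAt_expApply (Bop n) (e z) s
      have hi : IntervalIntegrable (fun s : ℝ => exp (s • Bop n) (Bop n (e z)))
          MeasureTheory.volume 0 t :=
        (LionsAux2.continuous_expApply (Bop n) (Bop n (e z))).intervalIntegrable 0 t
      have hFTC := intervalIntegral.integral_eq_sub_of_hasDerivAt hd hi
      have hend : exp ((0:ℝ) • Bop n) (e z) = e z := by
        rw [zero_smul, exp_zero, ContinuousLinearMap.one_apply]
      rw [hFTC, hend]
    have hIntn : ∀ n : ℕ, (∫ s in (0:ℝ)..t, SG n s (Bop n (e z)))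
        = - ∫ s in (0:ℝ)..t, SG n s (J n g) := by
      intro n
      rw [← intervalIntegral.integral_neg]
      congr 1
      funext s
      rw [hBval n, map_neg]
    set u : ℝ → H := fun s => Lop s g with hu
    have hucont : ContinuousOn u (Set.Icc 0 t) := (hLcont g).mono (fun s hs => hs.1)
    have huint : IntervalIntegrable u MeasureTheory.volume 0 t := by
      apply ContinuousOn.intervalIntegrable
      rwa [Set.uIcc_of_le ht]
    have hstepB : Tendsto (fun n => ∫ s in (0:ℝ)..t, SG n s (J n g)) atTop
        (𝓝 (∫ s in (0:ℝ)..t, u s)) := by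
      rw [Metric.tendsto_atTop]
      intro ε hε
      have ht1 : (0:ℝ) < t + 1 := by linarith
      obtain ⟨N₁, hN₁⟩ := hUnif g t ht (ε/(2*(t+1))) (by positivity)
      have htendJ : Tendsto (fun n => ‖J n g - g‖) atTop (𝓝 0) :=
        tendsto_iff_norm_sub_tendsto_zero.mp (hJtend g)
      obtain ⟨N₂, hN₂⟩ := (Metric.tendsto_atTop.mp htendJ) (ε/(2*(t+1))) (by positivity)
      refine ⟨max N₁ N₂, fun n hn => ?_⟩
      have hn₁ : N₁ ≤ n := le_trans (le_max_left _ _) hn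
      have hn₂ : N₂ ≤ n := le_trans (le_max_right _ _) hn
      have hJb : ‖J n g - g‖ ≤ ε/(2*(t+1)) := by
        have h := hN₂ n hn₂
        rw [Real.dist_eq, sub_zero, abs_of_nonneg (norm_nonneg _)] at h
        exact h.le
      have hSGint : IntervalIntegrable (fun s => SG n s (J n g))
          MeasureTheory.volume 0 t :=
        (LionsAux2.continuous_expApply (Bop n) (J n g)).intervalIntegrable 0 t
      rw [dist_eq_norm, ← intervalIntegral.integral_sub hSGint huint]
      have hbnd : ∀ s ∈ Set.uIoc (0:ℝ) t, ‖SG n s (J n g) - u s‖ ≤ ε/(t+1) := by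
        intro s hs
        rw [Set.uIoc_of_le ht] at hs
        have hs0 : (0:ℝ) ≤ s := hs.1.le
        have hst : s ≤ t := hs.2
        have h1 : ‖SG n s (J n g) - SG n s g‖ ≤ ‖J n g - g‖ := by
          rw [← map_sub]; exact hSGx n s _ hs0
        have h2 : ‖SG n s g - u s‖ ≤ ε/(2*(t+1)) := hN₁ n hn₁ s ⟨hs0, hst⟩
        have hsplit : SG n s (J n g) - u s
            = (SG n s (J n g) - SG n s g) + (SG n s g - u s) := by abel
        calc ‖SG n s (J n g) - u s‖
            ≤ ‖SG n s (J n g) - SG n s g‖ + ‖SG n s g - u s‖ := by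
              rw [hsplit]; exact norm_add_le _ _
          _ ≤ ε/(2*(t+1)) + ε/(2*(t+1)) := add_le_add (h1.trans hJb) h2
          _ = ε/(t+1) := by
              have ht1' : (t:ℝ) + 1 ≠ 0 := by linarith
              field_simp
              ring
      have hnormint := intervalIntegral.norm_integral_le_of_norm_le_const hbnd
      calc ‖∫ s in (0:ℝ)..t, (SG n s (J n g) - u s)‖
          ≤ ε/(t+1) * |t - 0| := hnormint
        _ = ε/(t+1) * t := by rw [sub_zero, abs_of_nonneg ht]
        _ < ε/(t+1) * (t+1) := by
            apply mul_lt_mul_of_pos_left (by linarith) (by positivity)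
        _ = ε := by field_simp
    have hstepL : Tendsto (fun n => SG n t (e z) - e z) atTop
        (𝓝 (Lop t (e z) - e z)) := (hLopx t ht (e z)).sub tendsto_const_nhds
    have hcombined : Tendsto (fun n => SG n t (e z) - e z) atTop
        (𝓝 (- ∫ s in (0:ℝ)..t, u s)) := by
      have heq : (fun n => SG n t (e z) - e z)
          = fun n => - ∫ s in (0:ℝ)..t, SG n s (J n g) := by
        funext n; rw [hstepA n, hIntn n]
      rw [heq]
      exact hstepB.neg
    have hfin := tendsto_nhds_unique hstepL hcombined
    have hgoal : Lop t (e z) = e z + (Lop t (e z) - e z) := by abel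
    rw [hgoal, hfin, sub_eq_add_neg]
  have hDer : ∀ (z : V) (g : H), (∀ v, B z v = ⟪g, e v⟫) →
      HasDerivWithinAt (fun t => Lop t (e z)) (-g) (Set.Ici (0:ℝ)) 0 := by
    intro z g hz
    set u : ℝ → H := fun s => Lop s g with hu
    have hucont : ContinuousOn u (Set.Ici 0) := hLcont g
    have huint : IntervalIntegrable u MeasureTheory.volume 0 0 := IntervalIntegrable.refl
    have hmeas : StronglyMeasurableAtFilter u (𝓝[>] (0:ℝ)) MeasureTheory.volume :=
      ⟨Set.Ici 0, Filter.mem_of_superset self_mem_nhdsWithin Set.Ioi_subset_Ici_self,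
        hucont.aestronglyMeasurable measurableSet_Ici⟩
    have hcw : ContinuousWithinAt u (Set.Ioi (0:ℝ)) 0 :=
      (hucont 0 Set.self_mem_Ici).mono Set.Ioi_subset_Ici_self
    have hG : HasDerivWithinAt (fun t => ∫ s in (0:ℝ)..t, u s) (u 0) (Set.Ici 0) 0 :=
      intervalIntegral.integral_hasDerivWithinAt_right huint hmeas hcw
    have hF : HasDerivWithinAt (fun t => e z - ∫ s in (0:ℝ)..t, u s) (-(u 0))
        (Set.Ici 0) 0 := hG.const_sub (e z)
    have hEq : Set.EqOn (fun t => Lop t (e z))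
        (fun t => e z - ∫ s in (0:ℝ)..t, u s) (Set.Ici 0) :=
      fun t htmem => hIntId z g hz t htmem
    have hD := hF.congr hEq (hEq Set.self_mem_Ici)
    have hu0 : u 0 = g := by
      show Lop 0 g = g
      rw [hL0, ContinuousLinearMap.one_apply]
    rwa [hu0] at hD
  exact ⟨Lop, hL0, hLadd, fun x => hLcont x, hDer⟩

end LionsAux3


/-- Lions' generation criterion: a bounded bilinear form `a` on a Hilbert space `V`,
continuously and densely embedded (via `e`) in a Hilbert space `H`, satisfying the
Gårding-type coercivity `α‖z‖_V² ≤ a(z,z) + lam‖e z‖_H²`, gives rise to an operator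
`A` (defined by `(Az, e v)_H = a(z,v)` on its natural domain) such that `−A`
generates a strongly continuous semigroup on `H`. -/
theorem lions_generation_criterion
    (V H : Type*)
    [NormedAddCommGroup V] [InnerProductSpace ℝ V] [CompleteSpace V]
    [NormedAddCommGroup H] [InnerProductSpace ℝ H] [CompleteSpace H]
    (e : V →L[ℝ] H) (hinj : Function.Injective e) (hdense : DenseRange e)
    (a : V →ₗ[ℝ] V →ₗ[ℝ] ℝ) (M : ℝ)
    (hbdd : ∀ u v : V, |a u v| ≤ M * ‖u‖ * ‖v‖)
    (α lam : ℝ) (hα : 0 < α)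
    (hcoer : ∀ z : V, α * ‖z‖ ^ 2 ≤ a z z + lam * ‖e z‖ ^ 2) :
    ∃ T : ℝ → H →L[ℝ] H,
      T 0 = ContinuousLinearMap.id ℝ H ∧
      (∀ s t : ℝ, 0 ≤ s → 0 ≤ t → T (s + t) = (T s).comp (T t)) ∧
      (∀ x : H, ContinuousOn (fun t => T t x) (Set.Ici (0:ℝ))) ∧
      (∀ z : V, ∀ Az : H, (∀ v : V, a z v = ⟪Az, e v⟫) →
        HasDerivWithinAt (fun t => T t (e z)) (-Az) (Set.Ici (0:ℝ)) 0) := by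
  classical
  set aL : V →L[ℝ] V →L[ℝ] ℝ := LinearMap.mkContinuous₂ a M
    (fun u v => by rw [Real.norm_eq_abs]; exact hbdd u v) with haL
  have haLapp : ∀ u v, aL u v = a u v := fun u v => rfl
  set B : V →L[ℝ] V →L[ℝ] ℝ := aL + lam • LionsAux.formE e with hB
  have hBapp : ∀ u v, B u v = a u v + lam * ⟪e u, e v⟫ := by
    intro u v
    rw [hB]
    simp only [ContinuousLinearMap.add_apply, ContinuousLinearMap.smul_apply,
      ContinuousLinearMap.coe_smul', Pi.smul_apply, smul_eq_mul]
    rw [haLapp, LionsAux.formE_apply]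
  have hcoB : ∀ z : V, α * ‖z‖ ^ 2 ≤ B z z := by
    intro z
    rw [hBapp z z, real_inner_self_eq_norm_sq]
    exact hcoer z
  have hcn : ∀ n : ℕ, IsCoercive (LionsAux.Bmu e B ((n:ℝ)+1)) :=
    fun n => LionsAux.isCoercive_Bmu e B hα hcoB (by positivity)
  obtain ⟨S, hS0, hSadd, hScont, hSder⟩ := LionsAux3.lions_main e hdense B hα hcoB hcn
    (fun n => LionsAux.Res e B (hcn n))
    (fun n f v => LionsAux.Res_spec e B (hcn n) f v)
    (fun n f z h => LionsAux.Res_unique e B (hcn n) h)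
  refine ⟨fun t => Real.exp (lam * t) • S t, ?_, ?_, ?_, ?_⟩
  · show Real.exp (lam * 0) • S 0 = ContinuousLinearMap.id ℝ H
    rw [mul_zero, Real.exp_zero, one_smul, hS0]
    rfl
  · intro s t hs ht
    show Real.exp (lam * (s + t)) • S (s + t)
        = (Real.exp (lam * s) • S s).comp (Real.exp (lam * t) • S t)
    rw [show lam * (s + t) = lam * s + lam * t by ring, Real.exp_add, hSadd s t hs ht,
      ContinuousLinearMap.smul_comp, ContinuousLinearMap.comp_smul, smul_smul]
  · intro x
    show ContinuousOn (fun t => Real.exp (lam * t) • S t x) (Set.Ici 0)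
    exact ((Real.continuous_exp.comp (continuous_const.mul continuous_id)).continuousOn).smul
      (hScont x)
  · intro z Az hAz
    have hD : ∀ v, B z v = ⟪Az + lam • e z, e v⟫ := by
      intro v
      rw [hBapp z v, hAz v, inner_add_left, real_inner_smul_left]
    have h2 := hSder z (Az + lam • e z) hD
    have h1 : HasDerivWithinAt (fun t => Real.exp (lam * t)) lam (Set.Ici (0:ℝ)) 0 := by
      have h := (Real.hasDerivAt_exp (lam * 0)).comp 0 ((hasDerivAt_id (0:ℝ)).const_mul lam)
      simpa [Function.comp_def] using h.hasDerivWithinAt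
    have h3 := h1.smul h2
    have hS0z : S 0 (e z) = e z := by rw [hS0, ContinuousLinearMap.one_apply]
    show HasDerivWithinAt (fun t => Real.exp (lam * t) • S t (e z)) (-Az) (Set.Ici (0:ℝ)) 0
    convert h3 using 1
    · rfl
    rw [hS0z, mul_zero, Real.exp_zero, one_smul]
    abel
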